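/- Let X be a finite connected vertex-transitive graph of valency k ≥ 1. Then the vertex connectivity of X is at least (2/3)(k+1); equivalently, removing fewer than ⌈(2/3)(k+1)⌉ vertices from X leaves a connected graph (unless the remainder has at most one vertex). -/

import Mathlib

/-!
Mader–Watkins atoms. Call a vertex set a fragment if it has a nonempty exterior and its vertex
boundary has the least possible size `κ`, and an atom a fragment of least size `a`. Submodularity
of the boundary size shows that an atom meeting a fragment lies inside it. By vertex transitivity
some image `A'` of an atom `A` contains a vertex of `∂A`; it cannot meet `A` or the exterior of
`A` (both fragments), so `A' ⊆ ∂A`. Then `∂A'` meets each of `A` and its exterior in at least `a`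
vertices, so `2a ≤ κ`, while a vertex of `A` has its `k` neighbours in `A ∪ ∂A`, so
`k + 1 ≤ a + κ ≤ 3κ/2`.
-/

open Finset

namespace SimpleGraph

variable {α : Type*} [Fintype α] [DecidableEq α] (G : SimpleGraph α) [DecidableRel G.Adj]

def vertexBoundary (A : Finset α) : Finset α :=
  univ.filter fun v => v ∉ A ∧ ∃ a ∈ A, G.Adj a v

def vertexExterior (A : Finset α) : Finset α := (A ∪ G.vertexBoundary A)ᶜ

def IsSeparated (A : Finset α) : Prop := A.Nonempty ∧ (G.vertexExterior A).Nonempty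

/- Mader's fragments and atoms: the boundary of a fragment is a minimum vertex cut, an atom is a
smallest fragment. -/
def IsFragment (A : Finset α) : Prop :=
  G.IsSeparated A ∧ ∀ B, G.IsSeparated B → #(G.vertexBoundary A) ≤ #(G.vertexBoundary B)

def IsAtom (A : Finset α) : Prop :=
  G.IsFragment A ∧ ∀ B, G.IsFragment B → #A ≤ #B

variable {G} {A B F : Finset α}

@[simp]
lemma mem_vertexBoundary {v : α} : v ∈ G.vertexBoundary A ↔ v ∉ A ∧ ∃ a ∈ A, G.Adj a v := by
  simp [vertexBoundary]

lemma mem_vertexExterior {v : α} :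
    v ∈ G.vertexExterior A ↔ v ∉ A ∧ ∀ a ∈ A, ¬ G.Adj a v := by
  simp only [vertexExterior, mem_compl, mem_union, mem_vertexBoundary]
  grind

lemma disjoint_vertexBoundary (A : Finset α) : Disjoint A (G.vertexBoundary A) :=
  Finset.disjoint_left.2 fun _ hv hv' => (mem_vertexBoundary.1 hv').1 hv

lemma disjoint_vertexExterior (A : Finset α) : Disjoint A (G.vertexExterior A) :=
  disjoint_compl_right.mono_left subset_union_left

lemma disjoint_vertexBoundary_vertexExterior (A : Finset α) :
    Disjoint (G.vertexBoundary A) (G.vertexExterior A) :=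
  Finset.disjoint_left.2 fun _ hv hv' =>
    have ⟨_, _, ha, hadj⟩ := mem_vertexBoundary.1 hv
    (mem_vertexExterior.1 hv').2 _ ha hadj

lemma card_add_card_vertexBoundary_add_card_vertexExterior (A : Finset α) :
    #A + #(G.vertexBoundary A) + #(G.vertexExterior A) = Fintype.card α := by
  rw [← card_union_of_disjoint (disjoint_vertexBoundary A), vertexExterior, card_add_card_compl]

lemma vertexExterior_anti (h : A ⊆ B) : G.vertexExterior B ⊆ G.vertexExterior A := by
  intro v hv
  rw [mem_vertexExterior] at hv ⊢
  exact ⟨fun hvA => hv.1 (h hvA), fun a ha => hv.2 a (h ha)⟩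

lemma subset_vertexExterior_vertexExterior (A : Finset α) :
    A ⊆ G.vertexExterior (G.vertexExterior A) := fun v hv =>
  mem_vertexExterior.2 ⟨fun h => (mem_vertexExterior.1 h).1 hv,
    fun _ hb hadj => (mem_vertexExterior.1 hb).2 v hv hadj.symm⟩

lemma vertexBoundary_vertexExterior_subset (A : Finset α) :
    G.vertexBoundary (G.vertexExterior A) ⊆ G.vertexBoundary A := by
  intro v hv
  obtain ⟨hvE, b, hb, hadj⟩ := mem_vertexBoundary.1 hv
  by_contra hvB
  have hvA : v ∉ A := fun hvA => (mem_vertexExterior.1 hb).2 v hvA hadj.symm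
  exact hvE (by simp [vertexExterior, hvA, hvB])

lemma IsSeparated.mono (hB : G.IsSeparated B) (hA : A.Nonempty) (h : A ⊆ B) :
    G.IsSeparated A :=
  ⟨hA, hB.2.mono (vertexExterior_anti h)⟩

lemma IsSeparated.vertexExterior (h : G.IsSeparated A) : G.IsSeparated (G.vertexExterior A) :=
  ⟨h.2, h.1.mono (subset_vertexExterior_vertexExterior A)⟩

lemma IsFragment.card_vertexBoundary_eq (hA : G.IsFragment A) (hB : G.IsFragment B) :
    #(G.vertexBoundary A) = #(G.vertexBoundary B) :=
  le_antisymm (hA.2 B hB.1) (hB.2 A hA.1)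

lemma IsFragment.vertexBoundary_vertexExterior (h : G.IsFragment A) :
    G.vertexBoundary (G.vertexExterior A) = G.vertexBoundary A :=
  eq_of_subset_of_card_le (vertexBoundary_vertexExterior_subset A) (h.2 _ h.1.vertexExterior)

lemma IsFragment.vertexExterior (h : G.IsFragment A) : G.IsFragment (G.vertexExterior A) :=
  ⟨h.1.vertexExterior, by rw [h.vertexBoundary_vertexExterior]; exact h.2⟩

lemma degree_add_one_le_card_add_card_vertexBoundary {v : α} (hv : v ∈ A) :
    G.degree v + 1 ≤ #A + #(G.vertexBoundary A) := by
  have hsub : insert v (G.neighborFinset v) ⊆ A ∪ G.vertexBoundary A := by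
    intro u hu
    rcases mem_insert.1 hu with rfl | hu
    · exact mem_union_left _ hv
    · by_cases huA : u ∈ A
      · exact mem_union_left _ huA
      · exact mem_union_right _
          (mem_vertexBoundary.2 ⟨huA, v, hv, (mem_neighborFinset _ _ _).1 hu⟩)
  have hv' : v ∉ G.neighborFinset v := by simp
  rw [← card_union_of_disjoint (disjoint_vertexBoundary A), ← card_neighborFinset_eq_degree,
    ← card_insert_of_notMem hv']
  exact card_le_card hsub

lemma card_vertexBoundary_inter_add_card_vertexBoundary_union_le (A B : Finset α) :
    #(G.vertexBoundary (A ∩ B)) + #(G.vertexBoundary (A ∪ B))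
      ≤ #(G.vertexBoundary A) + #(G.vertexBoundary B) := by
  have hunion : G.vertexBoundary (A ∩ B) ∪ G.vertexBoundary (A ∪ B)
      ⊆ G.vertexBoundary A ∪ G.vertexBoundary B := by
    intro v
    simp only [mem_union, mem_inter, mem_vertexBoundary]
    grind
  have hinter : G.vertexBoundary (A ∩ B) ∩ G.vertexBoundary (A ∪ B)
      ⊆ G.vertexBoundary A ∩ G.vertexBoundary B := by
    intro v
    simp only [mem_union, mem_inter, mem_vertexBoundary]
    grind
  rw [← card_union_add_card_inter, ← card_union_add_card_inter (G.vertexBoundary A)]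
  exact add_le_add (card_le_card hunion) (card_le_card hinter)

lemma IsSeparated.vertexBoundary_nonempty (hG : G.Connected) (h : G.IsSeparated A) :
    (G.vertexBoundary A).Nonempty := by
  obtain ⟨⟨u, hu⟩, ⟨w, hw⟩⟩ := h
  obtain ⟨p⟩ := hG.preconnected u w
  obtain ⟨d, -, hd, hd'⟩ := p.exists_boundary_dart (A : Set α) hu (mem_vertexExterior.1 hw).1
  exact ⟨d.snd, mem_vertexBoundary.2 ⟨hd', d.fst, hd, d.adj⟩⟩

section Image

variable {β : Type*} [Fintype β] [DecidableEq β] {H : SimpleGraph β} [DecidableRel H.Adj]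
  (φ : G ≃g H)

lemma vertexBoundary_image (A : Finset α) :
    H.vertexBoundary (A.image φ) = (G.vertexBoundary A).image φ := by
  ext v
  obtain ⟨v, rfl⟩ := φ.surjective v
  simp [φ.injective.eq_iff, φ.surjective.exists, φ.map_adj_iff]

lemma vertexExterior_image (A : Finset α) :
    H.vertexExterior (A.image φ) = (G.vertexExterior A).image φ := by
  ext v
  obtain ⟨v, rfl⟩ := φ.surjective v
  simp [vertexExterior, vertexBoundary_image, ← image_union, φ.injective.eq_iff]

lemma card_vertexBoundary_image (A : Finset α) :
    #(H.vertexBoundary (A.image φ)) = #(G.vertexBoundary A) := by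
  rw [vertexBoundary_image, card_image_of_injective _ φ.injective]

lemma IsSeparated.image (h : G.IsSeparated A) : H.IsSeparated (A.image φ) :=
  ⟨h.1.image φ, by rw [vertexExterior_image]; exact h.2.image φ⟩

lemma IsFragment.image (h : G.IsFragment A) : H.IsFragment (A.image φ) := by
  refine ⟨h.1.image φ, fun B hB => ?_⟩
  have := h.2 _ (hB.image φ.symm)
  rwa [card_vertexBoundary_image φ.symm, ← card_vertexBoundary_image φ] at this

lemma IsAtom.image (h : G.IsAtom A) : H.IsAtom (A.image φ) := by
  refine ⟨h.1.image φ, fun B hB => ?_⟩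
  have := h.2 _ (hB.image φ.symm)
  rwa [card_image_of_injective _ φ.symm.injective,
    ← card_image_of_injective A φ.injective] at this

end Image

lemma IsSeparated.exists_isFragment (hA : G.IsSeparated A) : ∃ F, G.IsFragment F := by
  classical
  obtain ⟨F, hF, hmin⟩ := exists_min_image (univ.filter G.IsSeparated)
    (fun F => #(G.vertexBoundary F)) ⟨A, mem_filter.2 ⟨mem_univ _, hA⟩⟩
  exact ⟨F, (mem_filter.1 hF).2, fun B hB => hmin B (mem_filter.2 ⟨mem_univ _, hB⟩)⟩

lemma IsFragment.exists_isAtom (hF : G.IsFragment F) : ∃ A, G.IsAtom A := by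
  classical
  obtain ⟨A, hA, hmin⟩ :=
    exists_min_image (univ.filter G.IsFragment) card ⟨F, mem_filter.2 ⟨mem_univ _, hF⟩⟩
  exact ⟨A, (mem_filter.1 hA).2, fun B hB => hmin B (mem_filter.2 ⟨mem_univ _, hB⟩)⟩

lemma IsAtom.card_vertexBoundary_lt (hA : G.IsAtom A) (hB : G.IsSeparated B) (hBA : #B < #A) :
    #(G.vertexBoundary A) < #(G.vertexBoundary B) := by
  by_contra! hle
  exact (hA.2 B ⟨hB, fun C hC => hle.trans (hA.1.2 C hC)⟩).not_gt hBA

lemma IsAtom.subset_of_isFragment (hA : G.IsAtom A) (hB : G.IsFragment B)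
    (hAB : (A ∩ B).Nonempty) : A ⊆ B := by
  by_contra hAB'
  have hinter := hA.card_vertexBoundary_lt (hB.1.mono hAB inter_subset_right)
    (card_lt_card (inf_lt_left.2 hAB'))
  have hsubmod := card_vertexBoundary_inter_add_card_vertexBoundary_union_le (G := G) A B
  have hκ := hA.1.card_vertexBoundary_eq hB
  have hext : G.vertexExterior (A ∪ B) = ∅ := by
    by_contra hne
    have := hA.1.2 _ ⟨hA.1.1.1.mono subset_union_left, nonempty_iff_ne_empty.2 hne⟩
    omega
  have hcardAB := card_add_card_vertexBoundary_add_card_vertexExterior (G := G) (A ∪ B)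
  have hcardB := card_add_card_vertexBoundary_add_card_vertexExterior (G := G) B
  have hAext := hA.2 _ hB.vertexExterior
  have hunion := card_union_add_card_inter A B
  have hpos := card_pos.2 hAB
  rw [hext, card_empty] at hcardAB
  omega

lemma IsAtom.subset_vertexBoundary (hA : G.IsAtom A) (hB : G.IsAtom B) {c : α} (hcB : c ∈ B)
    (hcA : c ∈ G.vertexBoundary A) : B ⊆ G.vertexBoundary A := by
  intro z hz
  by_contra hzA'
  by_cases hzA : z ∈ A
  · have hBA := hB.subset_of_isFragment hA.1 ⟨z, mem_inter.2 ⟨hz, hzA⟩⟩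
    exact Finset.disjoint_left.1 (disjoint_vertexBoundary A) (hBA hcB) hcA
  · have hzE : z ∈ G.vertexExterior A := by simp [vertexExterior, hzA, hzA']
    have hBE := hB.subset_of_isFragment hA.1.vertexExterior ⟨z, mem_inter.2 ⟨hz, hzE⟩⟩
    exact Finset.disjoint_left.1 (disjoint_vertexBoundary_vertexExterior A) hcA (hBE hcB)

lemma vertexBoundary_sdiff_vertexBoundary_subset {W : Finset α} (hBW : Disjoint B W) :
    G.vertexBoundary (W \ G.vertexBoundary B)
      ⊆ (G.vertexBoundary B ∩ W) ∪ (G.vertexBoundary W \ B) := by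
  intro v
  simp only [mem_union, mem_inter, mem_sdiff, mem_vertexBoundary]
  grind [Finset.disjoint_left, G.adj_comm]

lemma IsAtom.card_le_card_vertexBoundary_inter {W : Finset α} (hA : G.IsAtom A)
    (hW : G.IsFragment W) (hAW : A ⊆ G.vertexBoundary W) :
    #A ≤ #(G.vertexBoundary A ∩ W) := by
  rcases (W \ G.vertexBoundary A).eq_empty_or_nonempty with hempty | hne
  · rw [inter_eq_right.2 (sdiff_eq_empty_iff_subset.1 hempty)]
    exact hA.2 W hW
  · have hdisj : Disjoint A W := ((disjoint_vertexBoundary W).mono_right hAW).symm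
    have hmin := hW.2 _ (hW.1.mono hne sdiff_subset)
    have hsub := card_le_card (vertexBoundary_sdiff_vertexBoundary_subset (G := G) hdisj)
    have hunion := card_union_le (G.vertexBoundary A ∩ W) (G.vertexBoundary W \ A)
    have hsdiff := card_sdiff_of_subset hAW
    have hAW' := card_le_card hAW
    omega

lemma IsAtom.two_mul_card_le_card_vertexBoundary {W : Finset α} (hA : G.IsAtom A)
    (hW : G.IsFragment W) (hAW : A ⊆ G.vertexBoundary W) :
    2 * #A ≤ #(G.vertexBoundary A) := by
  have hin := hA.card_le_card_vertexBoundary_inter hW hAW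
  have hout := hA.card_le_card_vertexBoundary_inter hW.vertexExterior
    (hW.vertexBoundary_vertexExterior ▸ hAW)
  have hdisj : Disjoint (G.vertexBoundary A ∩ W) (G.vertexBoundary A ∩ G.vertexExterior W) :=
    (disjoint_vertexExterior W).mono inter_subset_right inter_subset_right
  have hsub := card_le_card (union_subset inter_subset_left inter_subset_left :
    G.vertexBoundary A ∩ W ∪ G.vertexBoundary A ∩ G.vertexExterior W ⊆ G.vertexBoundary A)
  rw [card_union_of_disjoint hdisj] at hsub
  omega

theorem IsFragment.two_mul_le_three_mul_card_vertexBoundary {k : ℕ} (hG : G.Connected)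
    (hreg : G.IsRegularOfDegree k) (hvt : ∀ x y : α, ∃ φ : G ≃g G, φ x = y)
    (hF : G.IsFragment F) : 2 * (k + 1) ≤ 3 * #(G.vertexBoundary F) := by
  obtain ⟨A, hA⟩ := hF.exists_isAtom
  obtain ⟨c, hc⟩ := hA.1.1.vertexBoundary_nonempty hG
  obtain ⟨a, ha⟩ := hA.1.1.1
  obtain ⟨φ, rfl⟩ := hvt a c
  have hφA := hA.subset_vertexBoundary (hA.image φ) (mem_image_of_mem φ ha) hc
  have htwo := (hA.image φ).two_mul_card_le_card_vertexBoundary hA.1 hφA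
  rw [card_image_of_injective _ φ.injective, card_vertexBoundary_image] at htwo
  have hdeg := degree_add_one_le_card_add_card_vertexBoundary (G := G) ha
  rw [hreg a] at hdeg
  have hκ := hF.card_vertexBoundary_eq hA.1
  omega

lemma exists_isSeparated_vertexBoundary_subset (S : Finset α) {x y : α} (hx : x ∉ S)
    (hy : y ∉ S) (hxy : ¬ (G.induce (↑S : Set α)ᶜ).Reachable ⟨x, hx⟩ ⟨y, hy⟩) :
    ∃ A, G.IsSeparated A ∧ G.vertexBoundary A ⊆ S := by
  classical
  let A := univ.filter fun v => ∃ hv : v ∉ S, (G.induce (↑S : Set α)ᶜ).Reachable ⟨x, hx⟩ ⟨v, hv⟩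
  have hAS : G.vertexBoundary A ⊆ S := by
    intro v hv
    obtain ⟨hvA, a, ha, hadj⟩ := mem_vertexBoundary.1 hv
    by_contra hvS
    obtain ⟨_, hxa⟩ := (mem_filter.1 ha).2
    exact hvA (mem_filter.2 ⟨mem_univ _, hvS, hxa.trans (Adj.reachable (by exact hadj))⟩)
  have hxA : x ∈ A := mem_filter.2 ⟨mem_univ _, hx, Reachable.refl _⟩
  have hyA : y ∉ A := fun h => hxy (mem_filter.1 h).2.2
  have hyE : y ∈ G.vertexExterior A := by
    simp only [vertexExterior, mem_compl, mem_union, not_or]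
    exact ⟨hyA, fun h => hy (hAS h)⟩
  exact ⟨A, ⟨⟨x, hxA⟩, ⟨y, hyE⟩⟩, hAS⟩

end SimpleGraph

open SimpleGraph

theorem stmt_12_general {α : Type*} [Fintype α] [DecidableEq α] (X : SimpleGraph α)
    [DecidableRel X.Adj] (k : ℕ)
    (hreg : ∀ v, X.degree v = k)
    (hconn : X.Connected)
    (hvt : ∀ x y : α, ∃ φ : X ≃g X, φ x = y) :
    ∀ S : Finset α, 3 * S.card < 2 * (k + 1) →
      (X.induce (↑S : Set α)ᶜ).Connected ∨ Fintype.card ((↑S : Set α)ᶜ : Set α) ≤ 1 := by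
  intro S hS
  by_contra! ⟨hdisc, hcard⟩
  obtain ⟨⟨x, hx⟩, ⟨y, hy⟩, hxy⟩ :
      ∃ x y : ((↑S : Set α)ᶜ : Set α), ¬ (X.induce (↑S : Set α)ᶜ).Reachable x y := by
    have : Nonempty ((↑S : Set α)ᶜ : Set α) := Fintype.card_pos_iff.1 (by omega)
    by_contra! hall
    exact hdisc ⟨hall⟩
  obtain ⟨A, hA, hAS⟩ := X.exists_isSeparated_vertexBoundary_subset S hx hy hxy
  obtain ⟨F, hF⟩ := hA.exists_isFragment
  have hFS : #(X.vertexBoundary F) ≤ #S := (hF.2 A hA).trans (card_le_card hAS)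
  have hκ := hF.two_mul_le_three_mul_card_vertexBoundary hconn hreg hvt
  omega

/-- At least `(2/3)(k+1)` vertices must be removed from a finite connected vertex-transitive
graph of valency `k ≥ 1` to disconnect it: removing any set `S` with `3·|S| < 2·(k+1)` leaves
a graph that is connected (unless it has at most one vertex). -/
theorem stmt_12 {α : Type*} [Fintype α] [DecidableEq α] (X : SimpleGraph α)
    [DecidableRel X.Adj] (k : ℕ) (hk : 1 ≤ k)
    (hreg : ∀ v, X.degree v = k)
    (hconn : X.Connected)
    (hvt : ∀ x y : α, ∃ φ : X ≃g X, φ x = y) :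
    ∀ S : Finset α, 3 * S.card < 2 * (k + 1) →
      (X.induce (↑S : Set α)ᶜ).Connected ∨ Fintype.card ((↑S : Set α)ᶜ : Set α) ≤ 1 :=
  stmt_12_general X k hreg hconn hvt
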